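/- Let η be the Markov chain on ℤ with transition kernel P started at η(0) = −1, and let θ₊ := min{n ≥ 0 : η(n) ≥ 0}. Then the random variables θ₊ and η(θ₊) are independent, and for every γ > 0 and every y ≥ 0: E[exp(γ·θ₊)·1{η(θ₊)=y} | η(0)=−1] = (P(0,y)/(1−P(0,−1)))·E[exp(γ·θ₊) | η(0)=−1] (both sides being possibly +∞). -/

import Mathlib

open MeasureTheory Filter
open scoped BigOperators ENNReal

noncomputable section

/-- `p(x) = w(-x)/(w(x)+w(-x))`. -/
def pfun (w : ℤ → ℝ) (x : ℤ) : ℝ := w (-x) / (w x + w (-x))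

/-- `q(x) = w(x)/(w(x)+w(-x))`. -/
def qfun (w : ℤ → ℝ) (x : ℤ) : ℝ := w x / (w x + w (-x))

/-- The Markov transition kernel `P(x,y)`. -/
def Pker (w : ℤ → ℝ) (x y : ℤ) : ℝ :=
  if x - 1 ≤ y then (∏ z ∈ Finset.Icc x y, pfun w z) * qfun w (y + 1) else 0

/-- The `m`-step transition kernel. -/
def Pm (w : ℤ → ℝ) : ℕ → ℤ → ℤ → ℝ
  | 0, x, y => if x = y then 1 else 0
  | m + 1, x, y => ∑' z : ℤ, Pm w m x z * Pker w z y

/-- The normalizing constant `Z`. -/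
def Zconst (w : ℤ → ℝ) : ℝ :=
  2 * ∑' x : ℕ, ∏ z ∈ Finset.Icc (1 : ℤ) (x : ℤ), w (-z) / w z

/-- The stationary distribution `ρ`. -/
def rho (w : ℤ → ℝ) (x : ℤ) : ℝ :=
  (Zconst w)⁻¹ * ∏ z ∈ Finset.Icc (1 : ℤ) (|2 * x + 1| / 2), w (-z) / w z

/-- The weight function `w` is positive, nondecreasing and satisfies
`lim_{z→∞} (w(z) - w(-z)) > 0`. -/
def GoodWeight (w : ℤ → ℝ) : Prop :=
  (∀ z, 0 < w z) ∧ (∀ z, w z ≤ w (z + 1)) ∧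
    ∃ c > (0 : ℝ), ∀ᶠ z : ℤ in atTop, c ≤ w z - w (-z)

/-- `η` is a Markov chain with (sub)stochastic kernel `K` started at `a`,
characterized through its cylinder probabilities. -/
def KChain {Ω : Type*} [MeasurableSpace Ω] (μ : Measure Ω)
    (K : ℤ → ℤ → ℝ) (η : ℕ → Ω → ℤ) (a : ℤ) : Prop :=
  (∀ n, Measurable (η n)) ∧
  ∀ (n : ℕ) (x : ℕ → ℤ),
    μ {ω | ∀ i ≤ n, η i ω = x i} =
      ENNReal.ofReal ((if x 0 = a then (1 : ℝ) else 0) *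
        ∏ i ∈ Finset.range n, K (x i) (x (i + 1)))

/-!
For `x ≤ 0 ≤ y` the kernel factorizes as `P(x,y) = (∏_{z=x}^{-1} p(z)) · P(0,y)`. Summing over the
position of the chain just before it first enters `[0,∞)` therefore gives
`μ(θ₊ = n, η(θ₊) = y) = r_y · μ(θ₊ = n)` with `r_y = P(0,y) / ∑_{k ≥ 0} P(0,k)`, and this
denominator is `1 - P(0,-1)` because no mass escapes to `+∞` (`p ≤ (1 - δ)/2` far to the right).
Both claims follow once `θ₊ < ∞` almost surely. This is a Foster–Lyapunov argument for the chain
killed when it leaves `(-∞,0)`: `V(y) = 2 - y` decreases in expectation by a fixed `ε > 0` at every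
step, because `p ≥ 1/2` on the negative integers, `p ≥ 1/2 + δ/2` far to the left, and near `0` the
killing removes enough mass. Hence `∑ₙ μ(θ₊ > n) ≤ V(-1)/ε < ∞`.
-/

open Set Topology

section MarkovChain

variable {Ω : Type*} [MeasurableSpace Ω] {μ : Measure Ω}

theorem measure_eq_tsum_inter_fiber {β : Type*} [MeasurableSpace β] [MeasurableSingletonClass β]
    [Countable β] {f : Ω → β} (hf : Measurable f) (s : Set Ω) :
    μ s = ∑' b, μ (f ⁻¹' {b} ∩ s) := by
  have h := tsum_measure_preimage_singleton (μ := μ.restrict s) countable_univ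
    fun b _ => hf (measurableSet_singleton b)
  rw [preimage_univ, Measure.restrict_apply_univ,
    tsum_univ (f := fun b => μ.restrict s (f ⁻¹' {b}))] at h
  rw [← h]
  exact tsum_congr fun b => Measure.restrict_apply (hf (measurableSet_singleton b))

variable {K : ℤ → ℤ → ℝ} {η : ℕ → Ω → ℤ} {a : ℤ}

def pathUpTo (η : ℕ → Ω → ℤ) (n : ℕ) (ω : Ω) : Fin (n + 1) → ℤ := fun i => η i ω

theorem KChain.measurable_pathUpTo (hη : KChain μ K η a) (n : ℕ) :
    Measurable (pathUpTo η n) :=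
  measurable_pi_lambda _ fun i => hη.1 i

theorem KChain.measure_cylinder_succ (hη : KChain μ K η a) (hK : ∀ x y, 0 ≤ K x y) (n : ℕ)
    (x : ℕ → ℤ) :
    μ {ω | ∀ i ≤ n + 1, η i ω = x i} =
      μ {ω | ∀ i ≤ n, η i ω = x i} * ENNReal.ofReal (K (x n) (x (n + 1))) := by
  rw [hη.2, hη.2, Finset.prod_range_succ, ← mul_assoc, ENNReal.ofReal_mul]
  exact mul_nonneg (by split_ifs <;> norm_num) (Finset.prod_nonneg fun i _ => hK _ _)

theorem KChain.measure_pathUpTo_inter (hη : KChain μ K η a) (hK : ∀ x y, 0 ≤ K x y) (n : ℕ)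
    (v : Fin (n + 1) → ℤ) (y : ℤ) :
    μ (pathUpTo η n ⁻¹' {v} ∩ η (n + 1) ⁻¹' {y}) =
      μ (pathUpTo η n ⁻¹' {v}) * ENNReal.ofReal (K (v (Fin.last n)) y) := by
  let x : ℕ → ℤ := fun i => if h : i < n + 1 then v ⟨i, h⟩ else y
  have hpath : pathUpTo η n ⁻¹' {v} = {ω | ∀ i ≤ n, η i ω = x i} := by
    ext ω
    simp only [mem_preimage, mem_singleton_iff, funext_iff, pathUpTo, x]
    exact ⟨fun h i hi => by rw [dif_pos (by omega), ← h],
      fun h i => by rw [h i (by omega), dif_pos]⟩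
  have hpath_succ : pathUpTo η n ⁻¹' {v} ∩ η (n + 1) ⁻¹' {y} =
      {ω | ∀ i ≤ n + 1, η i ω = x i} := by
    rw [hpath]
    ext ω
    simp only [mem_inter_iff, mem_preimage, mem_singleton_iff]
    refine ⟨fun ⟨hv, hy⟩ i hi => ?_, fun h => ⟨fun i hi => h i (by omega), ?_⟩⟩
    · rcases Nat.lt_or_ge i (n + 1) with hi' | hi'
      · exact hv i (by omega)
      · rw [show i = n + 1 by omega, hy]; simp [x]
    · simpa [x] using h (n + 1) le_rfl
  rw [hpath_succ, hη.measure_cylinder_succ hK, hpath]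
  simp [x, Fin.last]

theorem KChain.measure_pathUpTo_mem_inter (hη : KChain μ K η a) (hK : ∀ x y, 0 ≤ K x y)
    (n : ℕ) (S : Set (Fin (n + 1) → ℤ)) (y : ℤ) :
    μ (pathUpTo η n ⁻¹' S ∩ η (n + 1) ⁻¹' {y}) =
      ∑' x, μ (pathUpTo η n ⁻¹' S ∩ η n ⁻¹' {x}) * ENNReal.ofReal (K x y) := by
  have hfiber (T : Set Ω) : μ (pathUpTo η n ⁻¹' S ∩ T) =
      ∑' v, S.indicator (fun v => μ (pathUpTo η n ⁻¹' {v} ∩ T)) v := by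
    rw [measure_eq_tsum_inter_fiber (hη.measurable_pathUpTo n)]
    refine tsum_congr fun v => ?_
    by_cases hv : v ∈ S
    · rw [indicator_of_mem hv, ← inter_assoc, ← preimage_inter, singleton_inter_of_mem hv]
    · rw [indicator_of_notMem hv, ← inter_assoc, ← preimage_inter, singleton_inter_of_notMem hv,
        preimage_empty, empty_inter, measure_empty]
  have hlast (v : Fin (n + 1) → ℤ) (x : ℤ) : μ (pathUpTo η n ⁻¹' {v} ∩ η n ⁻¹' {x}) =
      if v (Fin.last n) = x then μ (pathUpTo η n ⁻¹' {v}) else 0 := by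
    split_ifs with h
    · congr 1
      refine inter_eq_left.2 fun ω hω => ?_
      simp only [mem_preimage, mem_singleton_iff] at hω ⊢
      rw [← h, ← hω]; rfl
    · refine measure_mono_null (fun ω ⟨hv, hx⟩ => h ?_) measure_empty
      simp only [mem_preimage, mem_singleton_iff] at hv hx
      rw [← hv, ← hx]; rfl
  simp_rw [hfiber, ← ENNReal.tsum_mul_right]
  rw [ENNReal.tsum_comm]
  refine tsum_congr fun v => ?_
  by_cases hv : v ∈ S
  · simp_rw [indicator_of_mem hv, hlast, ite_mul, zero_mul]
    rw [tsum_ite_eq', hη.measure_pathUpTo_inter hK]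
  · simp [indicator_of_notMem hv]

def killedLaw (μ : Measure Ω) (η : ℕ → Ω → ℤ) (D : Set ℤ) (n : ℕ) (x : ℤ) : ℝ≥0∞ :=
  μ {ω | (∀ m ≤ n, η m ω ∈ D) ∧ η n ω = x}

theorem killedLaw_of_notMem {D : Set ℤ} {x : ℤ} (hx : x ∉ D) (n : ℕ) :
    killedLaw μ η D n x = 0 := by
  refine measure_mono_null (fun ω ⟨hD, hn⟩ => hx ?_) measure_empty
  exact hn ▸ hD n le_rfl

theorem KChain.measure_forall_mem_and_succ_eq (hη : KChain μ K η a) (hK : ∀ x y, 0 ≤ K x y)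
    (D : Set ℤ) (n : ℕ) (y : ℤ) :
    μ {ω | (∀ m ≤ n, η m ω ∈ D) ∧ η (n + 1) ω = y} =
      ∑' x, killedLaw μ η D n x * ENNReal.ofReal (K x y) := by
  have hstay : {ω | ∀ m ≤ n, η m ω ∈ D} = pathUpTo η n ⁻¹' {v | ∀ i, v i ∈ D} := by
    ext ω
    exact ⟨fun h i => h i (by omega), fun h m hm => h ⟨m, by omega⟩⟩
  have h := hη.measure_pathUpTo_mem_inter hK n {v | ∀ i, v i ∈ D} y
  rw [← hstay] at h
  exact h

theorem KChain.killedLaw_succ (hη : KChain μ K η a) (hK : ∀ x y, 0 ≤ K x y) (D : Set ℤ)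
    (n : ℕ) (y : ℤ) :
    killedLaw μ η D (n + 1) y =
      D.indicator (fun y => ∑' x, killedLaw μ η D n x * ENNReal.ofReal (K x y)) y := by
  by_cases hy : y ∈ D
  · rw [indicator_of_mem hy, ← hη.measure_forall_mem_and_succ_eq hK, killedLaw]
    congr 1
    ext ω
    refine ⟨fun ⟨h, hn⟩ => ⟨fun m hm => h m (by omega), hn⟩, fun ⟨h, hn⟩ => ⟨fun m hm => ?_, hn⟩⟩
    rcases Nat.lt_or_ge m (n + 1) with hm' | hm'
    · exact h m (by omega)
    · rwa [show m = n + 1 by omega, hn]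
  · rw [indicator_of_notMem hy, killedLaw_of_notMem hy]

theorem KChain.tsum_killedLaw (hη : KChain μ K η a) (D : Set ℤ) (n : ℕ) :
    ∑' x, killedLaw μ η D n x = μ {ω | ∀ m ≤ n, η m ω ∈ D} := by
  rw [measure_eq_tsum_inter_fiber (hη.1 n)]
  exact tsum_congr fun x => by rw [inter_comm]; rfl

theorem KChain.killedLaw_zero_le (hη : KChain μ K η a) (D : Set ℤ) (x : ℤ) :
    killedLaw μ η D 0 x ≤ if x = a then 1 else 0 := by
  calc killedLaw μ η D 0 x ≤ μ {ω | ∀ i ≤ 0, η i ω = (fun _ => x) i} :=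
        measure_mono fun ω ⟨_, h⟩ i hi => by rwa [Nat.le_zero.1 hi]
    _ = if x = a then 1 else 0 := by rw [hη.2]; split_ifs <;> simp

theorem KChain.tsum_killedLaw_succ_mul_add_le (hη : KChain μ K η a) (hK : ∀ x y, 0 ≤ K x y)
    {D : Set ℤ} {V : ℤ → ℝ≥0∞} {ε : ℝ≥0∞}
    (hdrift : ∀ x ∈ D, ∑' y, D.indicator (fun y => ENNReal.ofReal (K x y) * V y) y + ε ≤ V x)
    (n : ℕ) :
    ∑' y, killedLaw μ η D (n + 1) y * V y + ε * μ {ω | ∀ m ≤ n, η m ω ∈ D} ≤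
      ∑' x, killedLaw μ η D n x * V x := by
  have hnext : ∑' y, killedLaw μ η D (n + 1) y * V y =
      ∑' x, killedLaw μ η D n x * ∑' y, D.indicator (fun y => ENNReal.ofReal (K x y) * V y) y := by
    simp_rw [← ENNReal.tsum_mul_left]
    rw [ENNReal.tsum_comm]
    refine tsum_congr fun y => ?_
    rw [hη.killedLaw_succ hK]
    by_cases hy : y ∈ D <;> simp [hy, ← ENNReal.tsum_mul_right, mul_assoc]
  rw [hnext, ← hη.tsum_killedLaw, ← ENNReal.tsum_mul_left, ← ENNReal.tsum_add]
  refine ENNReal.tsum_le_tsum fun x => ?_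
  by_cases hx : x ∈ D
  · rw [mul_comm ε, ← mul_add]
    exact mul_le_mul_right (hdrift x hx) _
  · simp [killedLaw_of_notMem hx]

theorem KChain.measure_forall_mem_eq_zero_of_drift (hη : KChain μ K η a)
    (hK : ∀ x y, 0 ≤ K x y) {D : Set ℤ} {V : ℤ → ℝ≥0∞} {ε : ℝ≥0∞} (hε : ε ≠ 0) (hV : V a ≠ ⊤)
    (hdrift : ∀ x ∈ D, ∑' y, D.indicator (fun y => ENNReal.ofReal (K x y) * V y) y + ε ≤ V x) :
    μ {ω | ∀ n, η n ω ∈ D} = 0 := by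
  set stay : ℕ → ℝ≥0∞ := fun n => μ {ω | ∀ m ≤ n, η m ω ∈ D}
  have hbound (n : ℕ) :
      ∑' x, killedLaw μ η D n x * V x + ε * ∑ k ∈ Finset.range n, stay k ≤ V a := by
    induction n with
    | zero =>
      calc _ = ∑' x, killedLaw μ η D 0 x * V x := by simp
        _ ≤ ∑' x, (if x = a then 1 else 0) * V x :=
          ENNReal.tsum_le_tsum fun x => mul_le_mul_left (hη.killedLaw_zero_le D x) _
        _ = V a := by simp
    | succ n ih =>
      calc _ = ∑' x, killedLaw μ η D (n + 1) x * V x + ε * stay n +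
            ε * ∑ k ∈ Finset.range n, stay k := by
            rw [Finset.sum_range_succ, mul_add]; ring
        _ ≤ _ := by gcongr; exact hη.tsum_killedLaw_succ_mul_add_le hK hdrift n
        _ ≤ V a := ih
  have hsum : ∑' n, stay n ≠ ⊤ := by
    refine ne_top_of_le_ne_top (ENNReal.div_ne_top hV hε)
      (ENNReal.tsum_le_of_sum_range_le fun n => ?_)
    rw [ENNReal.le_div_iff_mul_le (Or.inl hε) (Or.inr hV), mul_comm]
    exact le_add_self.trans (hbound n)
  by_contra h
  refine hsum (top_unique ?_)
  rw [← ENNReal.tsum_const_eq_top_of_ne_zero (α := ℕ) h]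
  exact ENNReal.tsum_le_tsum fun n => measure_mono fun ω hω m _ => hω m

theorem KChain.measure_start_ne (hη : KChain μ K η a) :
    μ {ω | η 0 ω ≠ a} = 0 := by
  refine (measure_preimage_eq_zero_iff_of_countable (f := η 0) (s := {a}ᶜ) (to_countable _)).2
    fun x hx => measure_mono_null (t := {ω | ∀ i ≤ 0, η i ω = (fun _ => x) i}) ?_ ?_
  · intro ω hω i hi
    rw [Nat.le_zero.1 hi]
    exact hω
  · rw [hη.2]
    simp [mem_compl_singleton_iff.1 hx]

end MarkovChain

section Kernel

variable {w : ℤ → ℝ}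

theorem qfun_eq_one_sub_pfun (hpos : ∀ z, 0 < w z) (x : ℤ) : qfun w x = 1 - pfun w x := by
  have hsum : w x + w (-x) ≠ 0 := (add_pos (hpos x) (hpos (-x))).ne'
  rw [qfun, pfun, eq_sub_iff_add_eq, ← add_div, div_self hsum]

theorem pfun_neg (hpos : ∀ z, 0 < w z) (x : ℤ) : pfun w (-x) = 1 - pfun w x := by
  rw [← qfun_eq_one_sub_pfun hpos, pfun, qfun, neg_neg, add_comm]

theorem pfun_nonneg (hpos : ∀ z, 0 < w z) (x : ℤ) : 0 ≤ pfun w x :=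
  div_nonneg (hpos _).le (add_pos (hpos x) (hpos (-x))).le

theorem qfun_nonneg (hpos : ∀ z, 0 < w z) (x : ℤ) : 0 ≤ qfun w x :=
  div_nonneg (hpos _).le (add_pos (hpos x) (hpos (-x))).le

theorem pfun_le_one (hpos : ∀ z, 0 < w z) (x : ℤ) : pfun w x ≤ 1 := by
  linarith [qfun_eq_one_sub_pfun hpos x, qfun_nonneg hpos x]

theorem Pker_nonneg (hpos : ∀ z, 0 < w z) (x y : ℤ) : 0 ≤ Pker w x y := by
  unfold Pker
  split_ifs
  · exact mul_nonneg (Finset.prod_nonneg fun z _ => pfun_nonneg hpos z) (qfun_nonneg hpos _)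
  · exact le_rfl

theorem Pker_sub_one (x : ℤ) : Pker w x (x - 1) = qfun w x := by
  rw [Pker, if_pos le_rfl, Finset.Icc_eq_empty (by omega), Finset.prod_empty, one_mul,
    sub_add_cancel]

theorem Pker_of_le {x y : ℤ} (h : x ≤ y) : Pker w x y = pfun w x * Pker w (x + 1) y := by
  rw [Pker, Pker, if_pos (by omega), if_pos (by omega), ← Finset.insert_Icc_add_one_left_eq_Icc h,
    Finset.prod_insert (by simp), mul_assoc]

theorem Pker_of_lt {x y : ℤ} (h : y < x - 1) : Pker w x y = 0 := by
  rw [Pker, if_neg (by omega)]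

theorem Pker_eq_prod_mul_Pker_zero {x y : ℤ} (hx : x ≤ 0) (hy : 0 ≤ y) :
    Pker w x y = (∏ z ∈ Finset.Icc x (-1), pfun w z) * Pker w 0 y := by
  have hsplit : Finset.Icc x y = Finset.Icc x (-1) ∪ Finset.Icc 0 y := by
    ext z; simp only [Finset.mem_Icc, Finset.mem_union]; omega
  rw [Pker, if_pos (by omega), Pker, if_pos (by omega), hsplit, Finset.prod_union
    (Finset.disjoint_left.2 fun z hz hz' => by simp only [Finset.mem_Icc] at hz hz'; omega),
    mul_assoc]

theorem GoodWeight.half_le_pfun (hw : GoodWeight w) {x : ℤ} (hx : x ≤ 0) : 1 / 2 ≤ pfun w x := by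
  have hle : w x ≤ w (-x) := monotone_int_of_le_succ hw.2.1 (by omega)
  rw [pfun, le_div_iff₀ (add_pos (hw.1 x) (hw.1 (-x)))]
  linarith

theorem GoodWeight.exists_eventually_le_pfun (hw : GoodWeight w) :
    ∃ δ > 0, ∀ᶠ z in atBot, δ ≤ 2 * pfun w z - 1 := by
  obtain ⟨c, hc, hev⟩ := hw.2.2
  have hw0 := hw.1 0
  refine ⟨c / (2 * w 0 + c), by positivity, ?_⟩
  filter_upwards [tendsto_neg_atBot_atTop.eventually hev, eventually_le_atBot 0] with z hcz hz
  rw [neg_neg] at hcz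
  have hwz : w z ≤ w 0 := monotone_int_of_le_succ hw.2.1 hz
  have hz_pos := hw.1 z
  have hsum : 0 < w z + w (-z) := add_pos hz_pos (hw.1 (-z))
  have h2p : 2 * pfun w z - 1 = (w (-z) - w z) / (w z + w (-z)) := by
    rw [pfun]; field_simp; ring
  rw [h2p, div_le_div_iff₀ (by positivity) hsum]
  nlinarith [mul_le_mul hcz hwz hz_pos.le (by linarith)]

theorem Pker_zero_neg_one (hpos : ∀ z, 0 < w z) : Pker w 0 (-1) = 1 - pfun w 0 := by
  rw [← qfun_eq_one_sub_pfun hpos, ← Pker_sub_one, zero_sub]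

theorem prod_Icc_zero_succ (f : ℤ → ℝ) (k : ℕ) :
    ∏ z ∈ Finset.Icc (0 : ℤ) (k + 1 : ℕ), f z = (∏ z ∈ Finset.Icc (0 : ℤ) k, f z) * f (k + 1) := by
  rw [Nat.cast_add, Nat.cast_one, ← Finset.insert_Icc_right_eq_Icc_add_one (by omega),
    Finset.prod_insert (by simp), mul_comm]

theorem GoodWeight.tendsto_prod_pfun (hw : GoodWeight w) :
    Tendsto (fun k : ℕ => ∏ z ∈ Finset.Icc (0 : ℤ) k, pfun w z) atTop (𝓝 0) := by
  obtain ⟨δ, hδ, hev⟩ := hw.exists_eventually_le_pfun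
  obtain ⟨N, hN⟩ := eventually_atBot.1 hev
  set θ := (1 - δ) / 2 with hθ_def
  have hθ (z : ℤ) (hz : -N ≤ z) : pfun w z ≤ θ := by
    have := hN (-z) (by omega)
    rw [pfun_neg hw.1] at this
    rw [hθ_def]; linarith
  have hθ0 : 0 ≤ θ := (pfun_nonneg hw.1 _).trans (hθ (-N) le_rfl)
  have hbound (m : ℕ) : ∏ z ∈ Finset.Icc (0 : ℤ) ((-N).toNat + m : ℕ), pfun w z ≤ θ ^ m := by
    induction m with
    | zero =>
      exact Finset.prod_le_one (fun z _ => pfun_nonneg hw.1 z) fun z _ => pfun_le_one hw.1 z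
    | succ m ih =>
      rw [← add_assoc, prod_Icc_zero_succ, pow_succ]
      exact mul_le_mul ih (hθ _ (by omega)) (pfun_nonneg hw.1 _) (pow_nonneg hθ0 m)
  refine (tendsto_add_atTop_iff_nat (-N).toNat).1 ?_
  refine squeeze_zero (fun m => Finset.prod_nonneg fun z _ => pfun_nonneg hw.1 z) (fun m => ?_)
    (tendsto_pow_atTop_nhds_zero_of_lt_one hθ0 (by rw [hθ_def]; linarith))
  rw [add_comm]
  exact hbound m

theorem GoodWeight.hasSum_Pker_zero (hw : GoodWeight w) :
    HasSum (fun k : ℕ => Pker w 0 k) (1 - Pker w 0 (-1)) := by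
  set G : ℕ → ℝ := fun k => ∏ z ∈ Finset.Icc (0 : ℤ) k, pfun w z
  have hG (k : ℕ) : Pker w 0 k = G k - G (k + 1) := by
    rw [show G (k + 1) = G k * pfun w (k + 1) from prod_Icc_zero_succ _ k, Pker,
      if_pos (by omega), qfun_eq_one_sub_pfun hw.1]
    ring
  have hG0 : 1 - Pker w 0 (-1) = G 0 := by
    simp [G, Pker_zero_neg_one hw.1]
  rw [hasSum_iff_tendsto_nat_of_nonneg (fun k => Pker_nonneg hw.1 _ _), hG0]
  simp_rw [hG, Finset.sum_range_sub']
  simpa using hw.tendsto_prod_pfun.const_sub (G 0)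

def killedDrift (w : ℤ → ℝ) (x : ℤ) : ℝ :=
  (2 - x) - ∑ y ∈ Finset.Icc (x - 1) (-1), Pker w x y * (2 - y)

theorem killedDrift_zero (hpos : ∀ z, 0 < w z) : killedDrift w 0 = 3 * pfun w 0 - 1 := by
  simp [killedDrift, Pker_zero_neg_one hpos]
  ring

theorem killedDrift_of_neg (hpos : ∀ z, 0 < w z) {x : ℤ} (hx : x < 0) :
    killedDrift w x = 2 * pfun w x - 1 + pfun w x * killedDrift w (x + 1) := by
  have hsum : ∑ y ∈ Finset.Icc (x - 1) (-1), Pker w x y * (2 - y) = qfun w x * (3 - x) +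
      pfun w x * ∑ y ∈ Finset.Icc (x + 1 - 1) (-1), Pker w (x + 1) y * (2 - y) := by
    rw [← Finset.insert_Icc_add_one_left_eq_Icc (by omega), Finset.sum_insert (by simp),
      Pker_sub_one, sub_add_cancel, add_sub_cancel_right, Finset.mul_sum]
    congr 1
    · push_cast; ring
    · refine Finset.sum_congr rfl fun y hy => ?_
      rw [Pker_of_le (Finset.mem_Icc.1 hy).1, mul_assoc]
  rw [killedDrift, killedDrift, hsum, qfun_eq_one_sub_pfun hpos]
  push_cast
  ring

theorem GoodWeight.half_pow_le_killedDrift (hw : GoodWeight w) (k : ℕ) :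
    (1 / 2) ^ (k + 1) ≤ killedDrift w (-k) := by
  induction k with
  | zero =>
    rw [Nat.cast_zero, neg_zero, killedDrift_zero hw.1]
    linarith [hw.half_le_pfun le_rfl]
  | succ k ih =>
    have hp := hw.half_le_pfun (x := -(k + 1 : ℕ)) (by omega)
    rw [killedDrift_of_neg hw.1 (by omega), show -((k + 1 : ℕ) : ℤ) + 1 = -k by push_cast; ring,
      pow_succ]
    nlinarith [mul_le_mul hp ih (by positivity) (pfun_nonneg hw.1 _)]

theorem GoodWeight.exists_pos_le_killedDrift (hw : GoodWeight w) :
    ∃ ε > 0, ∀ x < 0, ε ≤ killedDrift w x := by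
  obtain ⟨δ, hδ, hev⟩ := hw.exists_eventually_le_pfun
  obtain ⟨N, hN⟩ := eventually_atBot.1 hev
  refine ⟨min δ ((1 / 2) ^ ((-N).toNat + 1)), by positivity, fun x hx => ?_⟩
  by_cases hxN : x ≤ N
  · have hnext : 0 ≤ killedDrift w (x + 1) := by
      have := hw.half_pow_le_killedDrift (-(x + 1)).toNat
      rw [Int.toNat_of_nonneg (by omega), neg_neg] at this
      exact (by positivity : (0 : ℝ) ≤ _).trans this
    rw [killedDrift_of_neg hw.1 hx]
    have := hN x hxN
    nlinarith [pfun_nonneg hw.1 x, min_le_left δ ((1 / 2 : ℝ) ^ ((-N).toNat + 1))]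
  · have := hw.half_pow_le_killedDrift (-x).toNat
    rw [Int.toNat_of_nonneg (by omega), neg_neg] at this
    refine (min_le_right _ _).trans (le_trans ?_ this)
    exact pow_le_pow_of_le_one (by norm_num) (by norm_num) (by omega)

theorem tsum_indicator_Pker_mul_add_le (hpos : ∀ z, 0 < w z) {x : ℤ} {ε : ℝ}
    (hε : ε ≤ killedDrift w x) (hε0 : 0 ≤ ε) :
    ∑' y, (Iio 0).indicator (fun y => ENNReal.ofReal (Pker w x y) * ENNReal.ofReal (2 - y)) y +
      ENNReal.ofReal ε ≤ ENNReal.ofReal (2 - x) := by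
  have hterm_nonneg : ∀ y ∈ Finset.Icc (x - 1) (-1), 0 ≤ Pker w x y * (2 - y) := fun y hy =>
    have hy : (y : ℝ) ≤ -1 := by exact_mod_cast (Finset.mem_Icc.1 hy).2
    mul_nonneg (Pker_nonneg hpos _ _) (by linarith)
  have hfin : ∑' y, (Iio 0).indicator
      (fun y => ENNReal.ofReal (Pker w x y) * ENNReal.ofReal (2 - y)) y =
      ENNReal.ofReal (∑ y ∈ Finset.Icc (x - 1) (-1), Pker w x y * (2 - y)) := by
    rw [tsum_eq_sum (s := Finset.Icc (x - 1) (-1)), ENNReal.ofReal_sum_of_nonneg hterm_nonneg]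
    · refine Finset.sum_congr rfl fun y hy => ?_
      rw [Finset.mem_Icc] at hy
      rw [indicator_of_mem (show y ∈ Iio 0 by rw [mem_Iio]; omega),
        ← ENNReal.ofReal_mul (Pker_nonneg hpos _ _)]
    · intro y hy
      rw [Finset.mem_Icc] at hy
      by_cases hy0 : y ∈ Iio 0
      · rw [indicator_of_mem hy0, Pker_of_lt (by rw [mem_Iio] at hy0; omega),
          ENNReal.ofReal_zero, zero_mul]
      · exact indicator_of_notMem hy0 _
  rw [hfin, ← ENNReal.ofReal_add (Finset.sum_nonneg hterm_nonneg) hε0]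
  exact ENNReal.ofReal_le_ofReal (by rw [killedDrift] at hε; linarith)

end Kernel

section FirstEntrance

variable {Ω : Type*} {η : ℕ → Ω → ℤ}

def firstNonnegAt (η : ℕ → Ω → ℤ) (n : ℕ) : Set Ω := {ω | 0 ≤ η n ω ∧ ∀ m < n, η m ω < 0}

theorem pairwise_disjoint_firstNonnegAt :
    Pairwise (Function.onFun Disjoint (firstNonnegAt η)) := by
  refine pairwise_disjoint_on _ |>.2 fun m n hmn => disjoint_left.2 fun ω hm hn => ?_
  exact absurd (hn.2 m hmn) (not_lt.2 hm.1)

theorem iUnion_firstNonnegAt : ⋃ n, firstNonnegAt η n = {ω | ∀ n, η n ω < 0}ᶜ := by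
  ext ω
  simp only [mem_iUnion, mem_compl_iff, mem_ofPred_eq, not_forall, not_lt]
  refine ⟨fun ⟨n, hn⟩ => ⟨n, hn.1⟩, fun hex => ⟨Nat.find hex, Nat.find_spec hex, fun m hm => ?_⟩⟩
  exact not_le.1 (Nat.find_min hex hm)

variable [MeasurableSpace Ω] {μ : Measure Ω} {a : ℤ} {w : ℤ → ℝ}

theorem measurableSet_firstNonnegAt (hη : ∀ n, Measurable (η n)) (n : ℕ) :
    MeasurableSet (firstNonnegAt η n) := by
  unfold firstNonnegAt
  measurability

theorem measure_firstNonnegAt_eq_tsum (hη : ∀ n, Measurable (η n)) (n : ℕ) :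
    μ (firstNonnegAt η n) = ∑' k : ℕ, μ (firstNonnegAt η n ∩ {ω | η n ω = k}) := by
  rw [measure_eq_tsum_inter_fiber (hη n), ← (Nat.cast_injective (R := ℤ)).tsum_eq]
  · exact tsum_congr fun k => by rw [inter_comm]; rfl
  · intro x hx
    obtain ⟨ω, hω, hωn⟩ := nonempty_of_measure_ne_zero hx
    exact ⟨x.toNat, Int.toNat_of_nonneg (hω ▸ hωn.1)⟩

theorem KChain.measure_forall_neg_eq_zero (hw : GoodWeight w) (hη : KChain μ (Pker w) η a) :
    μ {ω | ∀ n, η n ω < 0} = 0 := by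
  obtain ⟨ε, hε, hdrift⟩ := hw.exists_pos_le_killedDrift
  exact hη.measure_forall_mem_eq_zero_of_drift (Pker_nonneg hw.1) (D := Iio 0)
    (V := fun y => ENNReal.ofReal (2 - y)) (ENNReal.ofReal_pos.2 hε).ne' ENNReal.ofReal_ne_top
    fun x hx => tsum_indicator_Pker_mul_add_le hw.1 (hdrift x hx) hε.le

theorem KChain.tsum_measure_firstNonnegAt [IsProbabilityMeasure μ] (hw : GoodWeight w)
    (hη : KChain μ (Pker w) η a) : ∑' n, μ (firstNonnegAt η n) = 1 := by
  have hmeas : MeasurableSet {ω | ∀ n, η n ω < 0} := by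
    have := hη.1
    measurability
  rw [← measure_iUnion pairwise_disjoint_firstNonnegAt (measurableSet_firstNonnegAt hη.1),
    iUnion_firstNonnegAt, prob_compl_eq_one_sub hmeas, hη.measure_forall_neg_eq_zero hw, tsub_zero]

theorem KChain.measure_firstNonnegAt_succ_inter (hpos : ∀ z, 0 < w z)
    (hη : KChain μ (Pker w) η a) (n : ℕ) {y : ℤ} (hy : 0 ≤ y) :
    μ (firstNonnegAt η (n + 1) ∩ {ω | η (n + 1) ω = y}) =
      (∑' x, killedLaw μ η (Iio 0) n x * ENNReal.ofReal (∏ z ∈ Finset.Icc x (-1), pfun w z)) *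
        ENNReal.ofReal (Pker w 0 y) := by
  have hset : firstNonnegAt η (n + 1) ∩ {ω | η (n + 1) ω = y} =
      {ω | (∀ m ≤ n, η m ω ∈ Iio 0) ∧ η (n + 1) ω = y} := by
    ext ω
    simp only [firstNonnegAt, mem_inter_iff, mem_Iio, Nat.lt_succ_iff]
    exact ⟨fun ⟨⟨_, h⟩, hn⟩ => ⟨h, hn⟩, fun ⟨h, hn⟩ => ⟨⟨hn ▸ hy, h⟩, hn⟩⟩
  rw [hset, hη.measure_forall_mem_and_succ_eq (Pker_nonneg hpos), ← ENNReal.tsum_mul_right]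
  refine tsum_congr fun x => ?_
  by_cases hx : x ∈ Iio 0
  · rw [Pker_eq_prod_mul_Pker_zero (le_of_lt hx) hy,
      ENNReal.ofReal_mul (Finset.prod_nonneg fun z _ => pfun_nonneg hpos z), mul_assoc]
  · simp [killedLaw_of_notMem hx]

theorem KChain.measure_firstNonnegAt_inter (hw : GoodWeight w) (hη : KChain μ (Pker w) η a)
    (ha : a < 0) (n : ℕ) {y : ℤ} (hy : 0 ≤ y) :
    μ (firstNonnegAt η n ∩ {ω | η n ω = y}) =
      ENNReal.ofReal (Pker w 0 y / (1 - Pker w 0 (-1))) * μ (firstNonnegAt η n) := by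
  cases n with
  | zero =>
    have h0 : μ (firstNonnegAt η 0) = 0 :=
      measure_mono_null (fun ω hω => by have := hω.1; show η 0 ω ≠ a; omega) hη.measure_start_ne
    rw [h0, mul_zero]
    exact measure_mono_null inter_subset_left h0
  | succ n =>
    have hp0 : 0 < 1 - Pker w 0 (-1) := by
      linarith [Pker_zero_neg_one hw.1, hw.half_le_pfun le_rfl]
    have hsum := hw.hasSum_Pker_zero
    rw [measure_firstNonnegAt_eq_tsum hη.1]
    simp_rw [hη.measure_firstNonnegAt_succ_inter hw.1 n (Nat.cast_nonneg _),
      hη.measure_firstNonnegAt_succ_inter hw.1 n hy]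
    rw [ENNReal.tsum_mul_left, ← ENNReal.ofReal_tsum_of_nonneg (fun k => Pker_nonneg hw.1 _ _)
      hsum.summable, hsum.tsum_eq, mul_left_comm, ← ENNReal.ofReal_mul (div_nonneg
      (Pker_nonneg hw.1 _ _) hp0.le), div_mul_cancel₀ _ hp0.ne']

theorem KChain.measure_iUnion_firstNonnegAt_inter [IsProbabilityMeasure μ] (hw : GoodWeight w)
    (hη : KChain μ (Pker w) η a) (ha : a < 0) {y : ℤ} (hy : 0 ≤ y) :
    μ (⋃ m, firstNonnegAt η m ∩ {ω | η m ω = y}) =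
      ENNReal.ofReal (Pker w 0 y / (1 - Pker w 0 (-1))) := by
  rw [measure_iUnion (f := fun m => firstNonnegAt η m ∩ {ω | η m ω = y})
      (pairwise_disjoint_firstNonnegAt.mono fun _ _ h =>
      h.mono inter_subset_left inter_subset_left)
      fun m => (measurableSet_firstNonnegAt hη.1 m).inter (hη.1 m (measurableSet_singleton y))]
  simp_rw [hη.measure_firstNonnegAt_inter hw ha _ hy]
  rw [ENNReal.tsum_mul_left, hη.tsum_measure_firstNonnegAt hw, mul_one]

end FirstEntrance

/-- for the Markov chain `η` with kernel `P` started at `-1` and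
`θ₊ := min{n ≥ 0 : η(n) ≥ 0}`, the random variables `θ₊` and `η(θ₊)` are independent, and
for every `γ > 0`, `y ≥ 0`:
`E[exp(γθ₊) 1{η(θ₊)=y}] = (P(0,y)/(1-P(0,-1))) E[exp(γθ₊)]` (both sides possibly `+∞`). -/
theorem stmt_9 (w : ℤ → ℝ) (hw : GoodWeight w)
    {Ω : Type*} [MeasurableSpace Ω] (μ : Measure Ω) [IsProbabilityMeasure μ]
    (η : ℕ → Ω → ℤ) (hη : KChain μ (Pker w) η (-1)) :
    (∀ (n : ℕ) (y : ℤ),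
      μ {ω | (0 ≤ η n ω ∧ ∀ m < n, η m ω < 0) ∧ η n ω = y} =
        μ {ω | 0 ≤ η n ω ∧ ∀ m < n, η m ω < 0} *
          μ {ω | ∃ m, (0 ≤ η m ω ∧ ∀ i < m, η i ω < 0) ∧ η m ω = y}) ∧
    (∀ γ > (0 : ℝ), ∀ y : ℤ, 0 ≤ y →
      (∑' n : ℕ, ENNReal.ofReal (Real.exp (γ * n)) *
          μ {ω | (0 ≤ η n ω ∧ ∀ m < n, η m ω < 0) ∧ η n ω = y}) =
        ENNReal.ofReal (Pker w 0 y / (1 - Pker w 0 (-1))) *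
          ((∑' n : ℕ, ENNReal.ofReal (Real.exp (γ * n)) *
              μ {ω | 0 ≤ η n ω ∧ ∀ m < n, η m ω < 0}) +
            ⊤ * μ {ω | ∀ n, η n ω < 0})) := by
  have ha : (-1 : ℤ) < 0 := by norm_num
  have hever (y : ℤ) (hy : 0 ≤ y) :
      μ {ω | ∃ m, (0 ≤ η m ω ∧ ∀ i < m, η i ω < 0) ∧ η m ω = y} =
        ENNReal.ofReal (Pker w 0 y / (1 - Pker w 0 (-1))) := by
    rw [ofPred_exists]
    exact hη.measure_iUnion_firstNonnegAt_inter hw ha hy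
  refine ⟨fun n y => ?_, fun γ _ y hy => ?_⟩
  · rcases lt_or_ge y 0 with hy | hy
    · have hne (m : ℕ) (ω : Ω) : ¬((0 ≤ η m ω ∧ ∀ i < m, η i ω < 0) ∧ η m ω = y) :=
        fun ⟨⟨h0, _⟩, hm⟩ => by omega
      simp [hne]
    · rw [hever y hy, mul_comm]
      exact hη.measure_firstNonnegAt_inter hw ha n hy
  · rw [hη.measure_forall_neg_eq_zero hw, mul_zero, add_zero, ← ENNReal.tsum_mul_left]
    refine tsum_congr fun n => ?_
    rw [mul_left_comm]
    exact congrArg _ (hη.measure_firstNonnegAt_inter hw ha n hy)
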